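/- If sequences (a_n), (b_n), (c_n) satisfy a_n = b_n + c_n for all n ≥ 1, b_1 = 1, c_1 = 0, b_n = a_{n−1} for n ≥ 2, and c_n = Σ_{k=1}^{n−1} b_k a_{n−k} for n ≥ 2, then a_n equals the number of planar rooted forests with n vertices (i.e., the Catalan number c_{n+1} with n+1 leaves), since the generating series satisfies X·A(X)² + (2X−1)·A(X) + X = 0. -/

import Mathlib

/-- Planar rooted trees. -/
inductive PTree : Type
  | node : List PTree → PTree

abbrev Forest : Type := List PTree

mutual
def PTree.weight : PTree → ℕ
  | .node c => 1 + Forest.weight c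
def Forest.weight : Forest → ℕ
  | [] => 0
  | t :: r => PTree.weight t + Forest.weight r
end

/-!
Under the rotation correspondence (first child, next sibling) planar forests with `n` vertices
are binary trees with `n` nodes, so they are counted by `catalan n`. The recursion for `b` and `c`
says exactly that `a (n + 1) = ∑ catalan i * catalan (n - i)` once `a` agrees with `catalan` below
`n + 1`, so `a n = catalan n` for `n ≥ 1`; the generating series of `a` is then `C - 1`, where
`C = 1 + X C²` is the Catalan series, and `X (C - 1)² + (2X - 1)(C - 1) + X = X C² - C + 1 = 0`.
-/

namespace Forest

def toBinaryTree : Forest → BinaryTree Unit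
  | [] => .nil
  | .node c :: r => .node () (toBinaryTree c) (toBinaryTree r)

def ofBinaryTree : BinaryTree Unit → Forest
  | .nil => []
  | .node _ l r => .node (ofBinaryTree l) :: ofBinaryTree r

theorem toBinaryTree_ofBinaryTree : ∀ t, toBinaryTree (ofBinaryTree t) = t
  | .nil => by rw [ofBinaryTree, toBinaryTree]
  | .node () l r => by
    rw [ofBinaryTree, toBinaryTree, toBinaryTree_ofBinaryTree l, toBinaryTree_ofBinaryTree r]

theorem ofBinaryTree_toBinaryTree : ∀ F, ofBinaryTree (toBinaryTree F) = F
  | [] => by rw [toBinaryTree, ofBinaryTree]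
  | .node c :: r => by
    rw [toBinaryTree, ofBinaryTree, ofBinaryTree_toBinaryTree c, ofBinaryTree_toBinaryTree r]

def equivBinaryTree : Forest ≃ BinaryTree Unit where
  toFun := toBinaryTree
  invFun := ofBinaryTree
  left_inv := ofBinaryTree_toBinaryTree
  right_inv := toBinaryTree_ofBinaryTree

theorem numNodes_toBinaryTree : ∀ F, (toBinaryTree F).numNodes = weight F
  | [] => by rw [toBinaryTree, BinaryTree.numNodes, weight]
  | .node c :: r => by
    rw [toBinaryTree, BinaryTree.numNodes, numNodes_toBinaryTree c, numNodes_toBinaryTree r,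
      weight, PTree.weight]
    ac_rfl

theorem card_weight_eq (n : ℕ) : Nat.card {F : Forest // weight F = n} = catalan n := by
  let e : {F : Forest // weight F = n} ≃ {t : BinaryTree Unit // t.numNodes = n} :=
    equivBinaryTree.subtypeEquiv fun F => by rw [← numNodes_toBinaryTree]; rfl
  rw [Nat.card_congr e, ← BinaryTree.treesOfNumNodesEq_card_eq_catalan, ← Nat.card_eq_finsetCard]
  simp only [BinaryTree.mem_treesOfNumNodesEq]

end Forest

theorem PowerSeries.mk_catalan_sq_mul_X_add_one (R : Type*) [CommSemiring R] :
    (mk fun n => (catalan n : R)) ^ 2 * X + 1 = mk fun n => (catalan n : R) := by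
  have h : map (Nat.castRingHom R) catalanSeries = mk fun n => (catalan n : R) := by
    ext n; simp
  simpa [h] using congrArg (map (Nat.castRingHom R)) catalanSeries_sq_mul_X_add_one

theorem catalan_succ_eq_add_sum_range (n : ℕ) :
    catalan (n + 1) = catalan n + ∑ i ∈ Finset.range n, catalan i * catalan (n - i) := by
  rw [catalan_succ, Fin.sum_univ_eq_sum_range (fun i => catalan i * catalan (n - i)),
    Finset.sum_range_succ, Nat.sub_self, catalan_zero, mul_one, add_comm]

section Recursion

variable {a b c : ℕ → ℕ}

theorem succ_eq_add_sum_range (habc : ∀ n, 1 ≤ n → a n = b n + c n) (hc1 : c 1 = 0)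
    (hc : ∀ n, 2 ≤ n → c n = ∑ k ∈ Finset.Icc 1 (n - 1), b k * a (n - k)) (n : ℕ) :
    a (n + 1) = b (n + 1) + ∑ i ∈ Finset.range n, b (i + 1) * a (n - i) := by
  rw [habc (n + 1) n.succ_pos]
  rcases n with _ | n
  · rw [hc1, Finset.sum_range_zero]
  · rw [hc (n + 1 + 1) (by omega), Nat.add_sub_cancel, ← Finset.Ico_add_one_right_eq_Icc,
      ← zero_add 1, ← Finset.sum_Ico_add', zero_add, ← Finset.range_eq_Ico]
    refine congrArg _ (Finset.sum_congr rfl fun i _ => ?_)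
    rw [Nat.add_sub_add_right]

theorem b_succ_eq_catalan (hb1 : b 1 = 1) (hb : ∀ n, 2 ≤ n → b n = a (n - 1)) {n : ℕ}
    (ha : ∀ k < n, a (k + 1) = catalan (k + 1)) : ∀ k ≤ n, b (k + 1) = catalan k
  | 0, _ => by rw [hb1, catalan_zero]
  | k + 1, hk => by rw [hb (k + 1 + 1) (by omega), Nat.add_sub_cancel, ha k (by omega)]

theorem succ_eq_catalan (habc : ∀ n, 1 ≤ n → a n = b n + c n) (hb1 : b 1 = 1) (hc1 : c 1 = 0)
    (hb : ∀ n, 2 ≤ n → b n = a (n - 1))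
    (hc : ∀ n, 2 ≤ n → c n = ∑ k ∈ Finset.Icc 1 (n - 1), b k * a (n - k)) (n : ℕ) :
    a (n + 1) = catalan (n + 1) := by
  induction n using Nat.strong_induction_on with
  | _ n ih =>
    have hb' := b_succ_eq_catalan hb1 hb ih
    rw [succ_eq_add_sum_range habc hc1 hc, catalan_succ_eq_add_sum_range, hb' n le_rfl]
    refine congrArg _ (Finset.sum_congr rfl fun i hi => ?_)
    have hi : i < n := Finset.mem_range.mp hi
    obtain ⟨j, hj⟩ : ∃ j, n - i = j + 1 := ⟨n - i - 1, by omega⟩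
    rw [hb' i hi.le, hj, ih j (by omega)]

end Recursion

/-- If `a_n = b_n + c_n`, `b_1 = 1`, `c_1 = 0`, `b_n = a_{n−1}` for `n ≥ 2` and
`c_n = Σ_{k=1}^{n−1} b_k a_{n−k}` for `n ≥ 2`, then the generating series of `a`
satisfies `X·A² + (2X−1)·A + X = 0` and `a_n` is the number of planar rooted
forests with `n` vertices. -/
theorem admissible_trees_count (a b c : ℕ → ℕ)
    (habc : ∀ n, 1 ≤ n → a n = b n + c n)
    (hb1 : b 1 = 1) (hc1 : c 1 = 0)
    (hb : ∀ n, 2 ≤ n → b n = a (n - 1))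
    (hc : ∀ n, 2 ≤ n → c n = ∑ k ∈ Finset.Icc 1 (n - 1), b k * a (n - k)) :
    (PowerSeries.X * (PowerSeries.mk (fun n => if n = 0 then 0 else (a n : ℚ))) ^ 2 +
        (2 * PowerSeries.X - 1) * PowerSeries.mk (fun n => if n = 0 then 0 else (a n : ℚ)) +
        PowerSeries.X = 0) ∧
      ∀ n, 1 ≤ n → a n = Nat.card {F : Forest // Forest.weight F = n} := by
  have ha : ∀ n, 1 ≤ n → a n = catalan n := fun n hn => by
    obtain ⟨m, rfl⟩ := Nat.exists_eq_add_of_le' hn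
    exact succ_eq_catalan habc hb1 hc1 hb hc m
  have hA : PowerSeries.mk (fun n => if n = 0 then 0 else (a n : ℚ)) =
      PowerSeries.mk (fun n => (catalan n : ℚ)) - 1 := by
    ext (_ | n) <;> simp [ha]
  refine ⟨?_, fun n hn => by rw [ha n hn, Forest.card_weight_eq]⟩
  rw [hA]
  linear_combination PowerSeries.mk_catalan_sq_mul_X_add_one ℚ
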